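/- arXiv:2103.04735 — 3 statements merged into one kernel-verified Lean document; each statement's English description precedes it below -/
import Mathlib

section
/- Let Φ > 0, φ be differentiable, 1/2 < s < 1 and 0 < ε < 2s-1. Then pointwise |∇(φΦ^s)|² ≤ (1 + s(1-s)/(ε(2s-1-ε))) Φ^{2s}|∇φ|² + (s + s(1-s)/(2s-1-ε)) ∇Φ·∇(φ²Φ^{2s-1}). -/
set_option maxHeartbeats 1000000

open scoped RealInnerProductSpace

open InnerProductSpace in
lemma grad_of_fderiv {n : ℕ} (f : EuclideanSpace ℝ (Fin n) → ℝ)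
    {x : EuclideanSpace ℝ (Fin n)} {L : EuclideanSpace ℝ (Fin n) →L[ℝ] ℝ}
    (h : HasFDerivAt f L x) :
    HasGradientAt f ((toDual ℝ (EuclideanSpace ℝ (Fin n))).symm L) x :=
  (hasFDerivAt_iff_hasGradientAt).mp h

theorem stmt2 {n : ℕ} (Φ φ : EuclideanSpace ℝ (Fin n) → ℝ)
    (hΦ : Differentiable ℝ Φ) (hφ : Differentiable ℝ φ)
    (hΦpos : ∀ x, 0 < Φ x) (s ε : ℝ) (hs1 : 1/2 < s) (hs2 : s < 1)
    (hε0 : 0 < ε) (hε : ε < 2*s - 1)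
    (x : EuclideanSpace ℝ (Fin n)) :
    ‖gradient (fun y => φ y * Φ y ^ s) x‖ ^ 2
      ≤ (1 + s*(1-s)/(ε*(2*s-1-ε))) * Φ x ^ (2*s) * ‖gradient φ x‖ ^ 2
        + (s + s*(1-s)/(2*s-1-ε))
            * ⟪gradient Φ x, gradient (fun y => φ y ^ 2 * Φ y ^ (2*s-1)) x⟫ := by
  have hax : (0:ℝ) < Φ x := hΦpos x
  have haxne : Φ x ≠ 0 := ne_of_gt hax
  set u := gradient φ x with hu
  set v := gradient Φ x with hv
  have hφd : HasFDerivAt φ (InnerProductSpace.toDual ℝ _ u) x :=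
    (hasGradientAt_iff_hasFDerivAt).mp (hφ x).hasGradientAt
  have hΦd : HasFDerivAt Φ (InnerProductSpace.toDual ℝ _ v) x :=
    (hasGradientAt_iff_hasFDerivAt).mp (hΦ x).hasGradientAt
  -- gradient of φ * Φ^s
  have h1 : HasGradientAt (fun y => φ y * Φ y ^ s)
      ((Φ x ^ s) • u + (φ x * (s * Φ x ^ (s-1))) • v) x := by
    have hr : HasFDerivAt (fun y => Φ y ^ s)
        ((s * Φ x ^ (s-1)) • (InnerProductSpace.toDual ℝ _ v)) x :=
      hΦd.rpow_const (Or.inl haxne)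
    have h2' := grad_of_fderiv _ (hφd.mul hr)
    convert h2' using 1
    · rfl
    simp [map_add, map_smul, smul_smul]
    module
  -- gradient of φ^2 * Φ^(2s-1)
  have h2 : HasGradientAt (fun y => φ y ^ 2 * Φ y ^ (2*s-1))
      ((2 * φ x * Φ x ^ (2*s-1)) • u + (φ x ^ 2 * ((2*s-1) * Φ x ^ (2*s-2))) • v) x := by
    have hsq : HasFDerivAt (fun y => φ y ^ 2)
        ((2 * φ x) • (InnerProductSpace.toDual ℝ _ u)) x := by
      have hm := hφd.mul hφd
      have heq : (fun y : EuclideanSpace ℝ (Fin n) => φ y ^ 2) = fun y => φ y * φ y := by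
        funext y; rw [sq]
      rw [heq]
      refine hm.congr_fderiv ?_
      ext z
      simp [two_mul]
      ring
    have hr : HasFDerivAt (fun y => Φ y ^ (2*s-1))
        (((2*s-1) * Φ x ^ (2*s-1-1)) • (InnerProductSpace.toDual ℝ _ v)) x :=
      hΦd.rpow_const (Or.inl haxne)
    have h3' := grad_of_fderiv _ (hsq.mul hr)
    have hee : (2*s-1-1 : ℝ) = 2*s-2 := by ring
    rw [hee] at h3'
    convert h3' using 1
    · rfl
    simp [map_add, map_smul, smul_smul]
    module
  rw [h1.gradient, h2.gradient]
  set a := Φ x with ha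
  set p := φ x with hp
  have hX : (0:ℝ) < a ^ s := Real.rpow_pos_of_pos hax s
  have hY : (0:ℝ) < a ^ (s-1) := Real.rpow_pos_of_pos hax (s-1)
  have e1 : a ^ (2*s) = a ^ s * a ^ s := by
    rw [← Real.rpow_add hax]; ring_nf
  have e2 : a ^ (2*s-1) = a ^ s * a ^ (s-1) := by
    rw [← Real.rpow_add hax]; ring_nf
  have e3 : a ^ (2*s-2) = a ^ (s-1) * a ^ (s-1) := by
    rw [← Real.rpow_add hax]; ring_nf
  set X := a ^ s with hXdef
  set Y := a ^ (s-1) with hYdef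
  rw [e1, e2, e3]
  have hnorm : ‖X • u + (p * (s * Y)) • v‖ ^ 2
      = X^2 * ‖u‖^2 + 2 * (X * (p * (s * Y))) * ⟪u, v⟫ + (p * (s * Y))^2 * ‖v‖^2 := by
    rw [norm_add_sq_real, real_inner_smul_left, real_inner_smul_right,
      norm_smul, norm_smul, Real.norm_eq_abs, Real.norm_eq_abs,
      mul_pow, mul_pow, sq_abs, sq_abs]
    ring
  have hinner : ⟪v, (2 * p * (X * Y)) • u + (p ^ 2 * ((2*s-1) * (Y * Y))) • v⟫
      = (2 * p * (X * Y)) * ⟪u, v⟫ + (p ^ 2 * ((2*s-1) * (Y * Y))) * ‖v‖^2 := by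
    rw [inner_add_right, real_inner_smul_right, real_inner_smul_right,
      real_inner_self_eq_norm_sq, real_inner_comm]
  rw [hnorm, hinner]
  -- scalar inequality
  have hCS : ⟪u, v⟫ ^ 2 ≤ ‖u‖^2 * ‖v‖^2 := by
    have h := real_inner_mul_inner_self_le u v
    rw [real_inner_self_eq_norm_sq u, real_inner_self_eq_norm_sq v] at h
    nlinarith [h]
  set A := ‖u‖^2 with hA'
  set B := ⟪u, v⟫ with hB'
  set C := ‖v‖^2 with hC'
  have hA : 0 ≤ A := sq_nonneg _
  have hC : 0 ≤ C := sq_nonneg _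
  have hD : (0:ℝ) < 2*s - 1 - ε := by linarith
  have hK : (0:ℝ) < s * (1-s) := mul_pos (by linarith) (by linarith)
  set c := s*(1-s)/(ε*(2*s-1-ε)) with hc_def
  have hc : 0 < c := div_pos hK (mul_pos hε0 hD)
  have hcd : s*(1-s)/(2*s-1-ε) = c*ε := by
    rw [hc_def]; field_simp
  rw [hcd]
  have hcK : c * (ε*(2*s-1-ε)) = s*(1-s) := by
    rw [hc_def]; field_simp
    exact mul_div_cancel_right₀ _ (by linarith)
  -- key bound
  have hQ2 : (p*X*Y*B)^2 ≤ (X^2*A) * (p^2*Y^2*C) := by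
    nlinarith [hCS, sq_nonneg (p*X*Y)]
  have hP : 0 ≤ X^2*A := mul_nonneg (sq_nonneg X) hA
  have hR : 0 ≤ p^2*Y^2*C := mul_nonneg (mul_nonneg (sq_nonneg p) (sq_nonneg Y)) hC
  have hsq : (2*ε*(p*X*Y*B))^2 ≤ (X^2*A + ε^2*(p^2*Y^2*C))^2 := by
    nlinarith [mul_le_mul_of_nonneg_left hQ2 (sq_nonneg ε),
      sq_nonneg (X^2*A - ε^2*(p^2*Y^2*C))]
  have habs : -(X^2*A + ε^2*(p^2*Y^2*C)) ≤ 2*ε*(p*X*Y*B) :=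
    (abs_le_of_sq_le_sq' hsq (by nlinarith [hP, hR])).1
  have hkey : 0 ≤ X^2*A + 2*ε*(p*X*Y*B) + ε^2*(p^2*Y^2*C) := by linarith
  have hkey2 : 0 ≤ c * (X^2*A + 2*ε*(p*X*Y*B) + ε^2*(p^2*Y^2*C)) :=
    mul_nonneg hc.le hkey
  have hterm : (c*(ε*(2*s-1-ε)) - s*(1-s)) * (p^2*(Y*Y)*C) = 0 := by
    rw [hcK]; ring
  clear_value A B C X Y a p c u v
  clear hφd hΦd h1 h2 hnorm hinner e1 e2 e3 hcd hu hv ha hp hA' hB' hC' hXdef hYdef hc_def hCS hQ2 hkey hcK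
  linarith [hkey2, hterm]
end

section
/- Let a : [k₀, ∞) → ℝ be nonnegative, nonincreasing and differentiable, and suppose there exist constants M > 0 and γ > 1 such that a(k) ≤ M (-a'(k))^γ for all k ≥ k₀. Then a(k) = 0 for all k ≥ k₀ + (γ/(γ-1)) M^{1/γ} a(k₀)^{(γ-1)/γ}. -/
theorem stmt3 (a : ℝ → ℝ) (k₀ M γ : ℝ) (hM : 0 < M) (hγ : 1 < γ)
    (hdiff : ∀ k ∈ Set.Ici k₀, DifferentiableAt ℝ a k)
    (hnonneg : ∀ k ∈ Set.Ici k₀, 0 ≤ a k)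
    (hanti : AntitoneOn a (Set.Ici k₀))
    (hineq : ∀ k ∈ Set.Ici k₀, a k ≤ M * (-(deriv a k)) ^ γ) :
    ∀ k, k₀ + (γ/(γ-1)) * M ^ (1/γ) * (a k₀) ^ ((γ-1)/γ) ≤ k → a k = 0 := by
  intro k₁ hk₁
  have hγ0 : (0:ℝ) < γ := by linarith
  set p : ℝ := (γ-1)/γ with hpdef
  have hp0 : 0 < p := div_pos (by linarith) hγ0
  have hMp : (0:ℝ) < M ^ (1/γ) := Real.rpow_pos_of_pos hM _
  have ha₀ : 0 ≤ a k₀ := hnonneg k₀ (Set.mem_Ici.mpr le_rfl)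
  have hthresh : 0 ≤ (γ/(γ-1)) * M ^ (1/γ) * (a k₀) ^ p := by
    apply mul_nonneg (mul_nonneg (div_nonneg hγ0.le (by linarith)) hMp.le) (Real.rpow_nonneg ha₀ _)
  have hk₀k₁ : k₀ ≤ k₁ := by linarith
  have hk₁mem : k₁ ∈ Set.Ici k₀ := hk₀k₁
  by_contra hne
  have ha1 : 0 < a k₁ := lt_of_le_of_ne (hnonneg k₁ hk₁mem) (Ne.symm hne)
  have apos : ∀ k ∈ Set.Icc k₀ k₁, 0 < a k := fun k hk =>
    lt_of_lt_of_le ha1 (hanti (Set.mem_Ici.mpr hk.1) hk₁mem hk.2)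
  set c : ℝ := p / M ^ (1/γ) with hcdef
  have hc0 : 0 < c := div_pos hp0 hMp
  -- deriv a is nonpositive at interior points
  have hderiv_nonpos : ∀ x ∈ Set.Ioo k₀ k₁, deriv a x ≤ 0 := by
    intro x hx
    have hxI : x ∈ Set.Ici k₀ := le_of_lt hx.1
    have hda := (hdiff x hxI).hasDerivAt
    have hslope : Filter.Tendsto (slope a x) (nhdsWithin x {x}ᶜ) (nhds (deriv a x)) :=
      hasDerivAt_iff_tendsto_slope.mp hda
    have hslope' : Filter.Tendsto (slope a x) (nhdsWithin x (Set.Ioi x)) (nhds (deriv a x)) :=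
      hslope.mono_left (nhdsWithin_mono x (fun y hy => ne_of_gt hy))
    refine le_of_tendsto hslope' ?_
    filter_upwards [self_mem_nhdsWithin] with y hy
    have hyI : y ∈ Set.Ici k₀ := le_of_lt (lt_trans hx.1 hy)
    have hle : a y ≤ a x := hanti hxI hyI (le_of_lt hy)
    have : slope a x y = (a y - a x) / (y - x) := by
      rw [slope_def_field]
    rw [this]
    apply div_nonpos_of_nonpos_of_nonneg (by linarith) (by have := Set.mem_Ioi.mp hy; linarith)
  -- main derivative bound
  have key : AntitoneOn (fun k => a k ^ p + c * k) (Set.Icc k₀ k₁) := by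
    apply antitoneOn_of_deriv_nonpos (convex_Icc k₀ k₁)
    · apply ContinuousOn.add
      · apply ContinuousOn.rpow_const
        · exact fun x hx => ((hdiff x (Set.mem_Ici.mpr hx.1)).continuousAt).continuousWithinAt
        · exact fun x hx => Or.inl (ne_of_gt (apos x hx))
      · exact (continuous_const.mul continuous_id).continuousOn
    · intro x hx
      rw [interior_Icc] at hx
      have hxI : x ∈ Set.Ici k₀ := le_of_lt hx.1
      exact ((((hdiff x hxI).hasDerivAt).rpow_const
        (Or.inl (ne_of_gt (apos x ⟨le_of_lt hx.1, le_of_lt hx.2⟩)))).add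
        ((hasDerivAt_id x).const_mul c)).differentiableAt.differentiableWithinAt
    · intro x hx
      rw [interior_Icc] at hx
      have hxIcc : x ∈ Set.Icc k₀ k₁ := ⟨le_of_lt hx.1, le_of_lt hx.2⟩
      have hxI : x ∈ Set.Ici k₀ := le_of_lt hx.1
      have hax : 0 < a x := apos x hxIcc
      have hda := (hdiff x hxI).hasDerivAt
      have hg : HasDerivAt (fun k => a k ^ p + c * k)
          (deriv a x * p * a x ^ (p - 1) + c * 1) x :=
        (hda.rpow_const (Or.inl (ne_of_gt hax))).add ((hasDerivAt_id x).const_mul c)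
      rw [hg.deriv]
      -- bound on -deriv a x
      have ht0 : 0 ≤ -deriv a x := by linarith [hderiv_nonpos x hx]
      have h1 : a x / M ≤ (-deriv a x) ^ γ := by
        rw [div_le_iff₀ hM]; linarith [hineq x hxI]
      have h2 : (a x / M) ^ (1/γ) ≤ -deriv a x := by
        have := Real.rpow_le_rpow (by positivity) h1 (by positivity : (0:ℝ) ≤ 1/γ)
        rwa [← Real.rpow_mul ht0, mul_one_div_cancel (ne_of_gt hγ0), Real.rpow_one] at this
      have h3 : (a x / M) ^ (1/γ) = a x ^ (1/γ) / M ^ (1/γ) :=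
        Real.div_rpow hax.le hM.le _
      have h4 : a x ^ (1/γ) * a x ^ (p - 1) = 1 := by
        rw [← Real.rpow_add hax]
        have : 1/γ + (p - 1) = 0 := by rw [hpdef]; field_simp; ring
        rw [this, Real.rpow_zero]
      have hpw : 0 < a x ^ (p - 1) := Real.rpow_pos_of_pos hax _
      have h5 : deriv a x * p * a x ^ (p - 1) ≤ -(((a x / M) ^ (1/γ)) * p * a x ^ (p-1)) := by
        have := mul_le_mul_of_nonneg_right (mul_le_mul_of_nonneg_right h2 hp0.le) hpw.le
        nlinarith
      have h6 : ((a x / M) ^ (1/γ)) * p * a x ^ (p-1) = c := by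
        rw [h3, hcdef]
        field_simp
        nlinarith [h4]
      nlinarith
  have hmem₀ : k₀ ∈ Set.Icc k₀ k₁ := ⟨le_rfl, hk₀k₁⟩
  have hmem₁ : k₁ ∈ Set.Icc k₀ k₁ := ⟨hk₀k₁, le_rfl⟩
  have hfin : a k₁ ^ p + c * k₁ ≤ a k₀ ^ p + c * k₀ := key hmem₀ hmem₁ hk₀k₁
  have hck : a k₀ ^ p ≤ c * (k₁ - k₀) := by
    have hc_eq : c * ((γ/(γ-1)) * M ^ (1/γ)) = 1 := by
      rw [hcdef, hpdef]
      field_simp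
      rw [div_self (show γ - 1 ≠ 0 by linarith)]
    have : (γ/(γ-1)) * M ^ (1/γ) * (a k₀) ^ p ≤ k₁ - k₀ := by linarith
    calc a k₀ ^ p = c * ((γ/(γ-1)) * M ^ (1/γ)) * a k₀ ^ p := by rw [hc_eq]; ring
      _ = c * ((γ/(γ-1)) * M ^ (1/γ) * a k₀ ^ p) := by ring
      _ ≤ c * (k₁ - k₀) := by
          apply mul_le_mul_of_nonneg_left this hc0.le
  have : a k₁ ^ p ≤ 0 := by linarith
  exact absurd this (not_le.mpr (Real.rpow_pos_of_pos ha1 _))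
end

section
/- Let a : [k₀, ∞) → [0, ∞) be nonincreasing and suppose a(k) ≤ C (-a'(k))^γ for a.e. k ≥ k₀, with C > 0, γ > 1, and a absolutely continuous. If additionally a(k₀) ≤ C' for some C' > 0, then sup over the set where a vanishes gives: a(k) = 0 for all k ≥ k₀ + (γ/(γ-1)) C^{1/γ} (C')^{(γ-1)/γ}. Consequently, if w, u ≥ 0 satisfy ∫ u^r (w-k)_+ = a(k), then w ≤ k₀ + (γ/(γ-1)) C^{1/γ} (C')^{(γ-1)/γ} a.e. on {u^r > 0}. -/
open MeasureTheory

lemma bern_helper {x y β : ℝ} (hy : 0 < y) (hxy : y ≤ x) (hβ0 : 0 ≤ β) (hβ1 : β ≤ 1) :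
    β * x ^ (β - 1) * (x - y) ≤ x ^ β - y ^ β := by
  have hx : 0 < x := hy.trans_le hxy
  have hs : -1 ≤ y / x - 1 := by
    have : 0 < y / x := div_pos hy hx
    linarith
  have hb := rpow_one_add_le_one_add_mul_self hs hβ0 hβ1
  rw [show 1 + (y / x - 1) = y / x by ring] at hb
  have hdiv : (y / x) ^ β = y ^ β / x ^ β := Real.div_rpow hy.le hx.le β
  rw [hdiv] at hb
  have hxβ : 0 < x ^ β := Real.rpow_pos_of_pos hx β
  have h2 : y ^ β ≤ x ^ β * (1 + β * (y / x - 1)) := by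
    calc y ^ β = x ^ β * (y ^ β / x ^ β) := by field_simp
    _ ≤ x ^ β * (1 + β * (y / x - 1)) := mul_le_mul_of_nonneg_left hb hxβ.le
  have h3 : x ^ (β - 1) = x ^ β / x := Real.rpow_sub_one hx.ne' β
  rw [h3]
  have heq : x ^ β * (1 + β * (y / x - 1)) = x ^ β - β * (x ^ β / x) * (x - y) := by
    field_simp
    ring
  linarith [heq ▸ h2]

theorem stmt13 {α : Type*} [MeasurableSpace α] (μ : Measure α)
    (u w : α → ℝ) (hu : Measurable u) (hw : Measurable w)
    (hunn : ∀ x, 0 ≤ u x) (hwnn : ∀ x, 0 ≤ w x) (r : ℝ) (hr : 0 < r)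
    (a : ℝ → ℝ) (k₀ C C' γ : ℝ) (hC : 0 < C) (hC' : 0 < C') (hγ : 1 < γ)
    (hnn : ∀ k ∈ Set.Ici k₀, 0 ≤ a k)
    (hanti : AntitoneOn a (Set.Ici k₀))
    (hAC : ∀ k ∈ Set.Ici k₀, a k = a k₀ + ∫ t in k₀..k, deriv a t)
    (hineq : ∀ᵐ k ∂(volume.restrict (Set.Ici k₀)), a k ≤ C * (-(deriv a k)) ^ γ)
    (ha0 : a k₀ ≤ C')
    (hadef : ∀ k, a k = ∫ x, u x ^ r * max (w x - k) 0 ∂μ)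
    (hint : ∀ k, Integrable (fun x => u x ^ r * max (w x - k) 0) μ) :
    (∀ k, k₀ + (γ/(γ-1)) * C ^ (1/γ) * C' ^ ((γ-1)/γ) ≤ k → a k = 0) ∧
    (∀ᵐ x ∂μ, 0 < u x → w x ≤ k₀ + (γ/(γ-1)) * C ^ (1/γ) * C' ^ ((γ-1)/γ)) := by
  have hγ0 : 0 < γ := by linarith
  set β : ℝ := (γ - 1) / γ with hβdef
  have hβpos : 0 < β := div_pos (by linarith) hγ0
  have hβlt : β < 1 := by
    rw [hβdef, div_lt_one hγ0]; linarith
  set K : ℝ := (γ/(γ-1)) * C ^ (1/γ) * C' ^ ((γ-1)/γ) with hKdef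
  have hKpos : 0 < K :=
    mul_pos (mul_pos (div_pos hγ0 (by linarith)) (Real.rpow_pos_of_pos hC _))
      (Real.rpow_pos_of_pos hC' _)
  set k₁ : ℝ := k₀ + K with hk₁def
  have hk₀k₁ : k₀ < k₁ := by rw [hk₁def]; linarith
  have ha0nn : 0 ≤ a k₀ := hnn k₀ Set.self_mem_Ici
  -- deriv is nonpositive on the open ray
  have hderiv_nonpos : ∀ p, k₀ < p → deriv a p ≤ 0 := by
    intro p hp
    by_cases hd : DifferentiableAt ℝ a p
    · have h1 : Filter.Tendsto (slope a p) (nhdsWithin p {p}ᶜ) (nhds (deriv a p)) :=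
        hasDerivAt_iff_tendsto_slope.mp hd.hasDerivAt
      have h2 : Filter.Tendsto (slope a p) (nhdsWithin p (Set.Ioi p)) (nhds (deriv a p)) :=
        h1.mono_left (nhdsWithin_mono p (fun x hx => ne_of_gt hx))
      refine le_of_tendsto h2 ?_
      filter_upwards [self_mem_nhdsWithin] with x hx
      have hxp : p < x := hx
      have hax : a x ≤ a p := hanti hp.le (by simp [Set.mem_Ici]; linarith) hxp.le
      rw [slope_def_field]
      exact div_nonpos_of_nonpos_of_nonneg (by linarith) (by linarith)
    · simp [deriv_zero_of_not_differentiableAt hd]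
  -- deriv a is interval integrable on [k₀, t]
  have hII : ∀ t, k₀ ≤ t → IntervalIntegrable (deriv a) volume k₀ t := by
    intro t ht
    by_contra h
    have h0 : (∫ s in k₀..t, deriv a s) = 0 := intervalIntegral.integral_undef h
    have hat : a t = a k₀ := by have := hAC t ht; rw [h0] at this; linarith
    have hconst : ∀ s ∈ Set.Icc k₀ t, a s = a k₀ := by
      intro s hs
      have h1 : a s ≤ a k₀ := hanti Set.self_mem_Ici hs.1 hs.1
      have h2 : a t ≤ a s := hanti hs.1 (le_trans hs.1 hs.2) hs.2
      linarith
    have hd0 : ∀ p ∈ Set.Ioo k₀ t, deriv a p = 0 := by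
      intro p hp
      have heq : a =ᶠ[nhds p] (fun _ => a k₀) :=
        Filter.eventuallyEq_of_mem (Ioo_mem_nhds hp.1 hp.2)
          (fun s hs => hconst s (Set.Ioo_subset_Icc_self hs))
      rw [heq.deriv_eq, deriv_const]
    apply h
    rw [intervalIntegrable_iff]
    apply (integrable_zero _ _ _).congr
    have hsub : Set.uIoc k₀ t ⊆ Set.Icc k₀ t := by
      rw [Set.uIoc_of_le ht]; exact Set.Ioc_subset_Icc_self
    have h1 : ∀ᵐ s ∂(volume.restrict (Set.uIoc k₀ t)), s ∈ Set.uIoc k₀ t :=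
      ae_restrict_mem measurableSet_uIoc
    have h2 : ∀ᵐ s : ℝ, s ≠ t := by
      refine (ae_iff).mpr ?_
      simp only [not_not, Set.setOf_eq_eq_singleton]
      exact measure_singleton t
    filter_upwards [h1, ae_restrict_of_ae h2] with s hs hst
    rw [Set.uIoc_of_le ht] at hs
    exact (hd0 s ⟨hs.1, lt_of_le_of_ne hs.2 hst⟩).symm
  -- a.e. differential inequality
  have hae : ∀ᵐ k ∂(volume.restrict (Set.Ici k₀)), deriv a k ≤ -((a k / C) ^ (1/γ)) := by
    have h2 : ∀ᵐ k : ℝ, k ≠ k₀ := by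
      refine (ae_iff).mpr ?_
      simp only [not_not, Set.setOf_eq_eq_singleton]
      exact measure_singleton k₀
    filter_upwards [hineq, ae_restrict_mem measurableSet_Ici, ae_restrict_of_ae h2]
      with k hk hkmem hkne
    have hk₀k : k₀ < k := lt_of_le_of_ne hkmem (Ne.symm hkne)
    have hd : 0 ≤ -(deriv a k) := by linarith [hderiv_nonpos k hk₀k]
    have hak : 0 ≤ a k := hnn k (Set.mem_Ici.mpr hkmem)
    have h3 : a k / C ≤ (-(deriv a k)) ^ γ := (div_le_iff₀ hC).mpr (by linarith [hk])
    have h4 : (a k / C) ^ (1/γ) ≤ ((-(deriv a k)) ^ γ) ^ (1/γ) :=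
      Real.rpow_le_rpow (by positivity) h3 (by positivity)
    rw [← Real.rpow_mul hd, mul_one_div, div_self hγ0.ne', Real.rpow_one] at h4
    linarith
  -- key inequality
  have key : ∀ s t, k₀ ≤ s → s ≤ t → a t ≤ a s - (t - s) * (a t / C) ^ (1/γ) := by
    intro s t hs hst
    have ht : k₀ ≤ t := hs.trans hst
    have hI1 : IntervalIntegrable (deriv a) volume k₀ s := hII s hs
    have hI2 : IntervalIntegrable (deriv a) volume s t := by
      apply (hII t ht).mono_set
      rw [Set.uIcc_of_le hst, Set.uIcc_of_le ht]
      exact Set.Icc_subset_Icc hs le_rfl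
    have hsplit := intervalIntegral.integral_add_adjacent_intervals hI1 hI2
    have h2 : a t - a s = ∫ p in s..t, deriv a p := by
      have e1 := hAC t ht
      have e2 := hAC s hs
      linarith [hsplit]
    have h3 : (∫ p in s..t, deriv a p) ≤ ∫ _ in s..t, -((a t / C) ^ (1/γ)) := by
      apply intervalIntegral.integral_mono_ae_restrict hst hI2 (intervalIntegrable_const)
      have hsub : Set.Icc s t ⊆ Set.Ici k₀ := fun x hx => hs.trans hx.1
      have hae' := ae_restrict_of_ae_restrict_of_subset hsub hae
      filter_upwards [hae', ae_restrict_mem measurableSet_Icc] with p hp hpmem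
      have hat : a t ≤ a p := hanti (hs.trans hpmem.1) ht hpmem.2
      have h5 : (a t / C) ^ (1/γ) ≤ (a p / C) ^ (1/γ) :=
        Real.rpow_le_rpow (div_nonneg (hnn t (Set.mem_Ici.mpr ht)) hC.le) (by gcongr) (by positivity)
      linarith
    rw [intervalIntegral.integral_const, smul_eq_mul] at h3
    linarith
  -- main claim : a k₁ = 0
  have hak₁ : a k₁ = 0 := by
    by_contra h
    have hε : 0 < a k₁ := lt_of_le_of_ne (hnn k₁ hk₀k₁.le) (Ne.symm h)
    set c : ℝ := C ^ (1/γ) with hcdef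
    have hc : 0 < c := Real.rpow_pos_of_pos hC _
    set L : ℝ := (Real.log (a k₁) - Real.log (a k₀)) / γ with hLdef
    have hbound : ∀ n : ℕ, 1 ≤ n →
        C' ^ β * L / n ≤ (a k₀) ^ β - (a k₁) ^ β - C' ^ β := by
      intro n hn
      have hn0 : 0 < (n : ℝ) := by exact_mod_cast hn
      set δ : ℝ := K / n with hδdef
      have hδ : 0 < δ := div_pos hKpos hn0
      set s : ℕ → ℝ := fun i => k₀ + i * δ with hsdef
      have hs0 : s 0 = k₀ := by simp [hsdef]
      have hsn : s n = k₁ := by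
        rw [hsdef, hk₁def, hδdef]
        field_simp
      have hsm : ∀ i j : ℕ, i ≤ j → s i ≤ s j := by
        intro i j hij
        simp only [hsdef]
        have : (i : ℝ) ≤ j := by exact_mod_cast hij
        nlinarith
      have hsk₀ : ∀ i : ℕ, k₀ ≤ s i := fun i => hs0 ▸ hsm 0 i (Nat.zero_le i)
      have hslek₁ : ∀ i : ℕ, i ≤ n → s i ≤ k₁ := fun i hi => hsn ▸ hsm i n hi
      have hApos : ∀ i : ℕ, i ≤ n → 0 < a (s i) := by
        intro i hi
        calc (0:ℝ) < a k₁ := hε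
        _ ≤ a (s i) := by
            rw [← hsn]
            exact hanti (Set.mem_Ici.mpr (hsk₀ i)) (Set.mem_Ici.mpr (hsk₀ n)) (hsm i n hi)
      -- per-step inequality
      have hstep : ∀ i : ℕ, i < n →
          β * δ / c * (1 + (Real.log (a (s (i+1))) - Real.log (a (s i))) / γ)
            ≤ (a (s i)) ^ β - (a (s (i+1))) ^ β := by
        intro i hi
        set x := a (s i) with hxdef
        set y := a (s (i+1)) with hydef
        have hx : 0 < x := hApos i hi.le
        have hy : 0 < y := hApos (i+1) hi
        have hxy : y ≤ x := hanti (hsk₀ i) (hsk₀ (i+1)) (hsm i (i+1) (by omega))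
        have hst : s (i+1) - s i = δ := by simp [hsdef]; push_cast; ring
        have hkey := key (s i) (s (i+1)) (hsk₀ i) (hsm i (i+1) (by omega))
        rw [hst] at hkey
        -- so x - y ≥ δ * (y/C)^(1/γ)
        have h1 : δ * (y / C) ^ (1/γ) ≤ x - y := by linarith
        have h2 := bern_helper hy hxy hβpos.le hβlt.le
        have h3 : β * x ^ (β - 1) * (δ * (y / C) ^ (1/γ)) ≤ x ^ β - y ^ β := by
          refine le_trans ?_ h2
          apply mul_le_mul_of_nonneg_left h1
          positivity
        -- rewrite LHS as β * δ / c * (y/x)^(1/γ)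
        have hb1 : β - 1 = -(1/γ) := by rw [hβdef]; field_simp; ring
        have hrw : β * x ^ (β - 1) * (δ * (y / C) ^ (1/γ)) = β * δ / c * (y / x) ^ (1/γ) := by
          rw [hb1, Real.rpow_neg hx.le, Real.div_rpow hy.le hC.le, Real.div_rpow hy.le hx.le,
            hcdef]
          field_simp
        rw [hrw] at h3
        refine le_trans ?_ h3
        apply mul_le_mul_of_nonneg_left ?_ (by positivity)
        -- 1 + log(y/x)/γ ≤ (y/x)^(1/γ)
        have hyx : 0 < y / x := div_pos hy hx
        have hlog : Real.log ((y / x) ^ (1/γ)) ≤ (y / x) ^ (1/γ) - 1 :=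
          Real.log_le_sub_one_of_pos (Real.rpow_pos_of_pos hyx _)
        rw [Real.log_rpow hyx, Real.log_div hy.ne' hx.ne'] at hlog
        have : (Real.log y - Real.log x) / γ = 1/γ * (Real.log y - Real.log x) := by ring
        linarith [this ▸ hlog]
      -- sum up
      have hsum1 : ∑ i ∈ Finset.range n, ((a (s i)) ^ β - (a (s (i+1))) ^ β)
          = (a k₀) ^ β - (a k₁) ^ β := by
        rw [Finset.sum_range_sub' (fun i => (a (s i)) ^ β), hs0, hsn]
      have hsum2 : ∑ i ∈ Finset.range n,
          (β * δ / c * (1 + (Real.log (a (s (i+1))) - Real.log (a (s i))) / γ))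
          = β * δ / c * (n + (Real.log (a k₁) - Real.log (a k₀)) / γ) := by
        rw [← Finset.mul_sum]
        congr 1
        rw [Finset.sum_add_distrib, Finset.sum_const, Finset.card_range, nsmul_eq_mul, mul_one]
        congr 1
        rw [← Finset.sum_div]
        congr 1
        rw [Finset.sum_range_sub (fun i => Real.log (a (s i))), hs0, hsn]
      have hsums : β * δ / c * (n + (Real.log (a k₁) - Real.log (a k₀)) / γ)
          ≤ (a k₀) ^ β - (a k₁) ^ β := by
        rw [← hsum1, ← hsum2]
        exact Finset.sum_le_sum (fun i hi => hstep i (Finset.mem_range.mp hi))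
      -- identify constants : β * K / c = C' ^ β
      have hconst : β * K / c = C' ^ β := by
        have hγ1 : γ - 1 ≠ 0 := by linarith
        have h1 : β * (γ / (γ - 1)) = 1 := by
          rw [hβdef]; field_simp
        have h2 : β * K / c = β * (γ / (γ - 1)) * (C' ^ β * (c / c)) := by
          rw [hKdef, ← hβdef]; ring
        rw [h2, h1, div_self hc.ne', one_mul, mul_one]
      have hexp : β * δ / c * (n + (Real.log (a k₁) - Real.log (a k₀)) / γ)
          = C' ^ β + C' ^ β * L / n := by
        rw [hδdef, hLdef, ← hconst]
        field_simp
      linarith [hexp ▸ hsums]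
    -- contradiction as n → ∞
    have htend : Filter.Tendsto (fun n : ℕ => C' ^ β * L / n) Filter.atTop (nhds 0) :=
      tendsto_const_div_atTop_nhds_zero_nat _
    have hge : (0:ℝ) ≤ (a k₀) ^ β - (a k₁) ^ β - C' ^ β :=
      le_of_tendsto htend (Filter.eventually_atTop.mpr ⟨1, fun n hn => hbound n hn⟩)
    have h5 : (a k₀) ^ β ≤ C' ^ β := Real.rpow_le_rpow ha0nn ha0 hβpos.le
    have h6 : 0 < (a k₁) ^ β := Real.rpow_pos_of_pos hε _
    linarith
  constructor
  · intro k hk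
    have h1 : a k ≤ a k₁ := hanti hk₀k₁.le (le_trans hk₀k₁.le hk) hk
    have h2 : 0 ≤ a k := hnn k (le_trans hk₀k₁.le hk)
    linarith [hak₁ ▸ h1]
  · have h0 : (∫ x, u x ^ r * max (w x - k₁) 0 ∂μ) = 0 := by
      rw [← hadef k₁]; exact hak₁
    have hnn' : (0 : α → ℝ) ≤ fun x => u x ^ r * max (w x - k₁) 0 := by
      intro x
      have : 0 ≤ u x ^ r := Real.rpow_nonneg (hunn x) r
      positivity
    have hz := (integral_eq_zero_iff_of_nonneg hnn' (hint k₁)).mp h0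
    filter_upwards [hz] with x hx hux
    have hur : 0 < u x ^ r := Real.rpow_pos_of_pos hux r
    have hmax : max (w x - k₁) 0 = 0 := by
      rcases mul_eq_zero.mp hx with h | h
      · exact absurd h hur.ne'
      · exact h
    have := le_max_left (w x - k₁) 0
    rw [hmax] at this
    rw [hk₁def] at this
    linarith
end
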